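/- Let k and l be integers with gcd(3, k, l) = 1 satisfying condition (B) for n = 3: 3 ∣ k+l or 3 ∣ 2k−l or 3 ∣ 2l−k. Then E_3(k,l) is isomorphic to the free product C_3 ∗ C_3 of two cyclic groups of order three, and the cyclic group C_3 acts freely via the shift on the nonidentity elements of G_3(k,l): for every g ∈ G_3(k,l) with g ≠ 1 and every j ∈ {1, 2}, θ^j(g) ≠ g. -/

import Mathlib

namespace CPG

/-- The free group on generators `x_0, …, x_{n-1}` indexed by `ZMod n`. -/
abbrev FG (n : ℕ) := FreeGroup (ZMod n)

/-- The automorphism of the free group sending `x_j` to `x_{j+i}`. -/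
def shiftA (n : ℕ) (i : ZMod n) : MulAut (FG n) :=
  FreeGroup.freeGroupCongr (Equiv.addRight i)

/-- The shift automorphism `θ` of the free group, `x_j ↦ x_{j+1}`. -/
def shiftAut (n : ℕ) : MulAut (FG n) := shiftA n 1

/-- The `θ`-orbit of a word `w`: the relator set of the cyclic presentation `P_n(w)`. -/
def rels (n : ℕ) (w : FG n) : Set (FG n) := Set.range fun i : ZMod n => shiftA n i w

/-- The cyclically presented group `G_n(w)`. -/
abbrev Gp (n : ℕ) (w : FG n) := PresentedGroup (rels n w)

lemma shiftA_shiftA (n : ℕ) (i j : ZMod n) (x : FG n) :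
    shiftA n i (shiftA n j x) = shiftA n (j + i) x := by
  show FreeGroup.map _ (FreeGroup.map _ x) = FreeGroup.map _ x
  rw [FreeGroup.map.comp]
  have h : (⇑(Equiv.addRight i) ∘ ⇑(Equiv.addRight j)) = ⇑(Equiv.addRight (j + i)) := by
    funext z
    simp [add_assoc]
  rw [h]

lemma image_shiftAut_rels (n : ℕ) (w : FG n) :
    (shiftAut n) '' rels n w = rels n w := by
  ext r
  constructor
  · rintro ⟨s, ⟨i, rfl⟩, rfl⟩
    exact ⟨i + 1, (shiftA_shiftA n 1 i w).symm⟩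
  · rintro ⟨i, rfl⟩
    refine ⟨shiftA n (i - 1) w, ⟨i - 1, rfl⟩, ?_⟩
    rw [shiftAut, shiftA_shiftA, sub_add_cancel]

lemma map_normalClosure_rels (n : ℕ) (w : FG n) :
    (Subgroup.normalClosure (rels n w)).map (shiftAut n).toMonoidHom
      = Subgroup.normalClosure (rels n w) := by
  rw [Subgroup.map_normalClosure (rels n w) (shiftAut n).toMonoidHom (shiftAut n).surjective]
  congr 1
  exact image_shiftAut_rels n w

/-- The shift automorphism `θ` of the cyclically presented group `G_n(w)`. -/
def shiftG (n : ℕ) (w : FG n) : MulAut (Gp n w) :=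
  QuotientGroup.congr (Subgroup.normalClosure (rels n w)) (Subgroup.normalClosure (rels n w))
    (shiftAut n) (map_normalClosure_rels n w)

/-- The generator `x_k` (subscript mod `n`). -/
def xg (n : ℕ) (k : ℤ) : FG n := FreeGroup.of (k : ZMod n)

/-- The word `x_0 x_k x_l`. -/
def wkl (n : ℕ) (k l : ℤ) : FG n := xg n 0 * xg n k * xg n l

/-- The cyclically presented group `G_n(k,l) = G_n(x_0 x_k x_l)`. -/
abbrev Gkl (n : ℕ) (k l : ℤ) := Gp n (wkl n k l)

/-- The shift automorphism of `G_n(k,l)`. -/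
def shiftKL (n : ℕ) (k l : ℤ) : MulAut (Gkl n k l) := shiftG n (wkl n k l)

end CPG

namespace CPG

/-- The generator `a` of the free group on `{a, x}` (modeled on `Bool`, `a = of false`). -/
def ga : FreeGroup Bool := FreeGroup.of false

/-- The generator `x` of the free group on `{a, x}` (`x = of true`). -/
def gx : FreeGroup Bool := FreeGroup.of true

/-- The relator set of the presentation `(a, x : a^n, W)`. -/
def rels2 (n : ℕ) (W : FreeGroup Bool) : Set (FreeGroup Bool) := {ga ^ n, W}

/-- The group with presentation `(a, x : a^n, W)`. -/
abbrev E2 (n : ℕ) (W : FreeGroup Bool) := PresentedGroup (rels2 n W)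

/-- The image of `a` in `(a, x : a^n, W)`. -/
def a2 (n : ℕ) (W : FreeGroup Bool) : E2 n W := PresentedGroup.of false

/-- The image of `x` in `(a, x : a^n, W)`. -/
def x2 (n : ℕ) (W : FreeGroup Bool) : E2 n W := PresentedGroup.of true

/-- The relator set of `E_n(k,l) = (a, x : a^n, x a^k x a^(l-k) x a^(-l))`. -/
def relsE (n : ℕ) (k l : ℤ) : Set (FreeGroup Bool) :=
  {ga ^ n, gx * ga ^ k * gx * ga ^ (l - k) * gx * ga ^ (-l)}

/-- The group `E_n(k,l)` with presentation `(a, x : a^n, x a^k x a^(l-k) x a^(-l))`. -/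
abbrev Ekl (n : ℕ) (k l : ℤ) := PresentedGroup (relsE n k l)

/-- The image of `a` in `E_n(k,l)`. -/
def aE (n : ℕ) (k l : ℤ) : Ekl n k l := PresentedGroup.of false

/-- The image of `x` in `E_n(k,l)`. -/
def xE (n : ℕ) (k l : ℤ) : Ekl n k l := PresentedGroup.of true

end CPG

/-!
The hypotheses amount to `l ≡ -k ≢ 0 (mod 3)`. The map `a ↦ b`, `x ↦ c b⁻ᵏ` from `E_3(k,l)` to
`C₃ ∗ C₃ = ⟨b⟩ ∗ ⟨c⟩` is an isomorphism with inverse `b ↦ a`, `c ↦ x aᵏ`, because modulo `a³` the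
relator of `E_3(k,l)` is `(x aᵏ)³`.

For the free action, let `rot` be the endomorphism `x ↦ y ↦ (xy)⁻¹ ↦ x` of the free group
`F(x, y)`. Sending `x_{jk}` to `rotʲ(x)` gives an isomorphism `G_3(k,l) ≅ F(x, y)` that carries `θᵏ`
to `rot`, so it suffices that `rot` fixes no nontrivial element. On reduced words, `rot` replaces
`xy` by `x⁻¹` and `y⁻¹x⁻¹` by `x` and otherwise acts letter by letter; the result is again reduced
and starts with a different letter, so it is never the word one started from.
-/

section General

theorem zpow_eq_zpow_of_modEq {G : Type*} [Group G] {x : G} {n : ℕ} {a b : ℤ}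
    (h : a ≡ b [ZMOD n]) (hx : x ^ n = 1) : x ^ a = x ^ b :=
  zpow_eq_zpow_iff_modEq.mpr <| h.of_dvd <| Int.natCast_dvd_natCast.mpr <|
    orderOf_dvd_of_pow_eq_one hx

theorem mul_zpow_mul_zpow_mul_zpow_eq_pow_three {G : Type*} [Group G] {a x : G} {k l : ℤ}
    (ha : a ^ 3 = 1) (hkl : (3 : ℤ) ∣ k + l) :
    x * a ^ k * x * a ^ (l - k) * x * a ^ (-l) = (x * a ^ k) ^ 3 := by
  rw [zpow_eq_zpow_of_modEq (a := l - k) (b := k) (Int.modEq_iff_dvd.mpr ?_).symm ha,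
    zpow_eq_zpow_of_modEq (a := -l) (b := k) (Int.modEq_iff_dvd.mpr ?_).symm ha, pow_three]
  · group
  all_goals omega

theorem MulAut.pow_apply_eq_self_of_apply_eq_self {G : Type*} [Group G] {σ : MulAut G} {g : G}
    (h : σ g = g) (m : ℕ) : (σ ^ m) g = g := by
  induction m with
  | zero => rfl
  | succ m ih => rw [pow_succ, MulAut.mul_apply, h, ih]

def zmodPowersHom {M : Type*} [Monoid M] {n : ℕ} [NeZero n] (g : M) (hg : g ^ n = 1) :
    Multiplicative (ZMod n) →* M where
  toFun m := g ^ m.toAdd.val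
  map_one' := by simp
  map_mul' a b := by
    rw [toAdd_mul, ZMod.val_add, ← pow_add]
    exact pow_eq_pow_of_modEq (Nat.mod_modEq _ _) hg

@[simp]
lemma zmodPowersHom_ofAdd_one {M : Type*} [Monoid M] {n : ℕ} [NeZero n] [Fact (1 < n)]
    (g : M) (hg : g ^ n = 1) : zmodPowersHom g hg (Multiplicative.ofAdd 1) = g := by
  simp [zmodPowersHom, ZMod.val_one]

theorem MonoidHom.ext_mzmod {M : Type*} [Monoid M] {n : ℕ} [NeZero n]
    {f g : Multiplicative (ZMod n) →* M}
    (h : f (Multiplicative.ofAdd 1) = g (Multiplicative.ofAdd 1)) : f = g := by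
  refine MonoidHom.ext fun m => ?_
  have hm : m = Multiplicative.ofAdd 1 ^ m.toAdd.val := by
    rw [← ofAdd_nsmul, nsmul_one, ZMod.natCast_zmod_val, ofAdd_toAdd]
  rw [hm, map_pow, map_pow, h]

end General

namespace CPG

open FreeGroup (of mk IsReduced)

section Rotation

-- letters of words in `F(x, y)`, with `x = of false`, `y = of true` and capitals for inverses

local notation "𝐱" => ((false, true) : Bool × Bool)
local notation "𝐗" => ((false, false) : Bool × Bool)
local notation "𝐲" => ((true, true) : Bool × Bool)
local notation "𝐘" => ((true, false) : Bool × Bool)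

def rot : FreeGroup Bool →* FreeGroup Bool :=
  FreeGroup.lift fun t => if t then (of false * of true)⁻¹ else of true

@[simp] lemma rot_of_false : rot (of false) = of true := by simp [rot]

@[simp] lemma rot_of_true : rot (of true) = (of false * of true)⁻¹ := by simp [rot]

def rotWord : List (Bool × Bool) → List (Bool × Bool)
  | [] => []
  | 𝐱 :: 𝐲 :: r => 𝐗 :: rotWord r
  | 𝐘 :: 𝐗 :: r => 𝐱 :: rotWord r
  | 𝐱 :: r => 𝐲 :: rotWord r
  | 𝐗 :: r => 𝐘 :: rotWord r
  | 𝐲 :: r => 𝐘 :: 𝐗 :: rotWord r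
  | 𝐘 :: r => 𝐱 :: 𝐲 :: rotWord r

lemma mk_cons (p : Bool × Bool) (L : List (Bool × Bool)) :
    mk (p :: L) = (if p.2 then of p.1 else (of p.1)⁻¹) * mk L := by
  rcases p with ⟨_, _ | _⟩ <;> rfl

lemma mk_rotWord (L : List (Bool × Bool)) : mk (rotWord L) = rot (mk L) := by
  induction L using rotWord.induct with
  | case1 => rfl
  | _ => simp [rotWord, mk_cons, mul_assoc, *]

def rotHead : Bool × Bool → Option (Bool × Bool) → Bool × Bool
  | 𝐱, some 𝐲 => 𝐗
  | 𝐱, _ => 𝐲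
  | 𝐗, _ => 𝐘
  | 𝐲, _ => 𝐘
  | 𝐘, _ => 𝐱

lemma head?_rotWord_cons (p : Bool × Bool) (r : List (Bool × Bool)) :
    (rotWord (p :: r)).head? = some (rotHead p r.head?) := by
  rcases p with ⟨_ | _, _ | _⟩ <;> rcases r with _ | ⟨⟨_ | _, _ | _⟩, r⟩ <;> rfl

lemma rotHead_ne (p : Bool × Bool) (h : Option (Bool × Bool)) : rotHead p h ≠ p := by
  revert p h; decide

lemma isReduced_cons_rotWord_cons {b q : Bool × Bool} {r : List (Bool × Bool)}
    (hr : IsReduced (rotWord (q :: r)))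
    (hb : ∀ h, b.1 = (rotHead q h).1 → b.2 = (rotHead q h).2) :
    IsReduced (b :: rotWord (q :: r)) :=
  List.isChain_cons.mpr ⟨by simpa [head?_rotWord_cons] using hb _, hr⟩

lemma isReduced_rotWord {L : List (Bool × Bool)} (hL : IsReduced L) : IsReduced (rotWord L) := by
  induction L using rotWord.induct with
  | case1 => exact IsReduced.nil
  | case2 r ih | case3 r ih | case5 r ih | case4 r _ ih | case6 r ih | case7 r _ ih =>
    have hr := ih (hL.infix (by simp [List.infix_cons_iff]))
    simp only [rotWord, *]
    rcases r with _ | ⟨q, r⟩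
    · simp [rotWord]
    simp only [FreeGroup.isReduced_cons_cons] at hL ⊢
    try refine ⟨by decide, ?_⟩
    refine isReduced_cons_rotWord_cons hr fun h => ?_
    clear ih hr
    -- a finite check on the letters at the junction
    rcases q with ⟨_ | _, _ | _⟩ <;> rcases h with _ | ⟨⟨_ | _, _ | _⟩⟩ <;>
      simp [rotHead] at hL ⊢ <;> simp_all

theorem eq_one_of_rot_eq_self {w : FreeGroup Bool} (hw : rot w = w) : w = 1 := by
  have hfix : rotWord w.toWord = w.toWord := by
    rw [← (isReduced_rotWord FreeGroup.isReduced_toWord).reduce_eq, ← FreeGroup.toWord_mk,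
      mk_rotWord, FreeGroup.mk_toWord, hw]
  rcases hword : w.toWord with _ | ⟨p, r⟩
  · exact FreeGroup.toWord_eq_nil_iff.mp hword
  · have hhead := head?_rotWord_cons p r
    rw [← hword, hfix, hword, List.head?_cons, Option.some_inj] at hhead
    exact (rotHead_ne p _ hhead.symm).elim

def rotOrbit : ZMod 3 → FreeGroup Bool := ![of false, of true, (of false * of true)⁻¹]

lemma rot_rotOrbit (j : ZMod 3) : rot (rotOrbit j) = rotOrbit (j + 1) := by
  revert j; decide

lemma rotOrbit_mul_rotOrbit_mul_rotOrbit (j : ZMod 3) :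
    rotOrbit j * rotOrbit (j + 1) * rotOrbit (j - 1) = 1 := by
  revert j; decide

end Rotation

section Shift

variable {n : ℕ} {w : FG n}

lemma shiftG_of (i : ZMod n) :
    shiftG n w (PresentedGroup.of i) = PresentedGroup.of (i + 1) := by
  change PresentedGroup.mk _ (shiftAut n (of i)) = PresentedGroup.mk _ (of _)
  simp [shiftAut, shiftA]

lemma shiftG_pow_of (j : ℕ) (i : ZMod n) :
    (shiftG n w ^ j) (PresentedGroup.of i) = PresentedGroup.of (i + j) := by
  induction j with
  | zero => simp
  | succ j ih => rw [pow_succ', MulAut.mul_apply, ih, shiftG_of, Nat.cast_succ, add_assoc]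

lemma shiftG_pow_self : shiftG n w ^ n = 1 :=
  MulEquiv.toMonoidHom_injective <| PresentedGroup.ext fun i => by simp [shiftG_pow_of]

lemma toGroup_shiftG_pow {H : Type*} [Group H] {f : ZMod n → H}
    (hf : ∀ r ∈ rels n w, FreeGroup.lift f r = 1) {ρ : H →* H} {j : ℕ}
    (hρ : ∀ i, f (i + j) = ρ (f i)) (g : Gp n w) :
    PresentedGroup.toGroup hf ((shiftG n w ^ j) g) = ρ (PresentedGroup.toGroup hf g) := by
  have hcomp : (PresentedGroup.toGroup hf).comp (shiftG n w ^ j).toMonoidHom =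
      ρ.comp (PresentedGroup.toGroup hf) :=
    PresentedGroup.ext fun i => by simp [shiftG_pow_of, hρ]
  exact DFunLike.congr_fun hcomp g

lemma shiftA_wkl (k l : ℤ) (i : ZMod n) :
    shiftA n i (wkl n k l) = of i * of ((k : ZMod n) + i) * of ((l : ZMod n) + i) := by
  simp [wkl, xg, shiftA]

end Shift

section FreeAction

variable {k l : ℤ}

lemma lift_rotOrbit_rels (hk : (k : ZMod 3) * k = 1) (hl : (l : ZMod 3) = -k) :
    ∀ r ∈ rels 3 (wkl 3 k l), FreeGroup.lift (fun i => rotOrbit (i * k)) r = 1 := by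
  rintro r ⟨i, rfl⟩
  dsimp only
  rw [shiftA_wkl, map_mul, map_mul, FreeGroup.lift_apply_of, FreeGroup.lift_apply_of,
    FreeGroup.lift_apply_of, show ((k : ZMod 3) + i) * k = i * k + 1 by linear_combination hk,
    show ((l : ZMod 3) + i) * k = i * k - 1 by linear_combination k * hl - hk]
  exact rotOrbit_mul_rotOrbit_mul_rotOrbit _

def toFreeGroup (hk : (k : ZMod 3) * k = 1) (hl : (l : ZMod 3) = -k) :
    Gkl 3 k l →* FreeGroup Bool :=
  PresentedGroup.toGroup (lift_rotOrbit_rels hk hl)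

def ofFreeGroup (k l : ℤ) : FreeGroup Bool →* Gkl 3 k l :=
  FreeGroup.lift fun t => PresentedGroup.of (if t then (k : ZMod 3) else 0)

lemma ofFreeGroup_rotOrbit (hl : (l : ZMod 3) = -k) (j : ZMod 3) :
    ofFreeGroup k l (rotOrbit j) = PresentedGroup.of (j * k) := by
  have hrel : (PresentedGroup.of 0 * PresentedGroup.of (k : ZMod 3) *
      PresentedGroup.of (-k : ZMod 3) : Gkl 3 k l) = 1 := by
    simpa [PresentedGroup.of, shiftA_wkl, hl] using
      PresentedGroup.one_of_mem (rels := rels 3 (wkl 3 k l)) ⟨0, rfl⟩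
  obtain rfl | rfl | rfl : j = 0 ∨ j = 1 ∨ j = -1 := by revert j; decide
  · simp [ofFreeGroup, rotOrbit]
  · simp [ofFreeGroup, rotOrbit]
  · rw [show rotOrbit (-1) = (of false * of true)⁻¹ from rfl, neg_one_mul,
      eq_inv_of_mul_eq_one_right hrel]
    simp [ofFreeGroup]

lemma ofFreeGroup_toFreeGroup (hk : (k : ZMod 3) * k = 1) (hl : (l : ZMod 3) = -k)
    (g : Gkl 3 k l) : ofFreeGroup k l (toFreeGroup hk hl g) = g := by
  have hcomp : (ofFreeGroup k l).comp (toFreeGroup hk hl) = MonoidHom.id _ :=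
    PresentedGroup.ext fun i => by
      simp [toFreeGroup, ofFreeGroup_rotOrbit hl, mul_assoc, hk]
  exact DFunLike.congr_fun hcomp g

theorem eq_one_of_shiftKL_eq_self (hk3 : ¬ (3 : ℤ) ∣ k) (hkl : (3 : ℤ) ∣ k + l)
    {g : Gkl 3 k l} (hg : shiftKL 3 k l g = g) : g = 1 := by
  have hk : (k : ZMod 3) * k = 1 := by
    have hk0 : (k : ZMod 3) ≠ 0 := (ZMod.intCast_zmod_eq_zero_iff_dvd k 3).not.mpr hk3
    generalize (k : ZMod 3) = a at hk0 ⊢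
    revert a; decide
  have hl : (l : ZMod 3) = -k := by
    rw [eq_neg_iff_add_eq_zero, ← Int.cast_add, ZMod.intCast_zmod_eq_zero_iff_dvd]
    exact_mod_cast (by omega : (3 : ℤ) ∣ l + k)
  have hshift (i : ZMod 3) :
      rotOrbit ((i + (k : ZMod 3).val) * k) = rot (rotOrbit (i * k)) := by
    rw [ZMod.natCast_zmod_val, rot_rotOrbit, add_mul, hk]
  have hrot : rot (toFreeGroup hk hl g) = toFreeGroup hk hl g := by
    rw [toFreeGroup, ← toGroup_shiftG_pow _ hshift g,
      MulAut.pow_apply_eq_self_of_apply_eq_self (σ := shiftG 3 (wkl 3 k l)) hg]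
  rw [← ofFreeGroup_toFreeGroup hk hl g, eq_one_of_rot_eq_self hrot, map_one]

end FreeAction

section Presentation

variable {k l : ℤ}

open scoped Monoid.Coprod
open Monoid.Coprod (inl inr)

local notation "C₃" => Multiplicative (ZMod 3)

lemma aE_pow_three : aE 3 k l ^ 3 = 1 := by
  simpa [aE, PresentedGroup.of, ga] using
    PresentedGroup.one_of_mem (rels := relsE 3 k l) (Or.inl rfl)

lemma xE_mul_aE_zpow_pow_three (hkl : (3 : ℤ) ∣ k + l) : (xE 3 k l * aE 3 k l ^ k) ^ 3 = 1 := by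
  rw [← mul_zpow_mul_zpow_mul_zpow_eq_pow_three aE_pow_three hkl]
  simpa [aE, xE, PresentedGroup.of, ga, gx] using
    PresentedGroup.one_of_mem (rels := relsE 3 k l) (Or.inr rfl)

lemma coprod_inl_pow_three : (inl (.ofAdd 1) : C₃ ∗ C₃) ^ 3 = 1 := by
  rw [← map_pow]; exact map_one _

lemma coprod_inr_pow_three : (inr (.ofAdd 1) : C₃ ∗ C₃) ^ 3 = 1 := by
  rw [← map_pow]; exact map_one _

def eklToCoprod (hkl : (3 : ℤ) ∣ k + l) : Ekl 3 k l →* C₃ ∗ C₃ :=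
  PresentedGroup.toGroup (f := fun t => if t then inr (.ofAdd 1) *
    inl (.ofAdd 1) ^ (-k) else inl (.ofAdd 1)) <| by
    rintro r (rfl | rfl)
    · simpa [ga] using coprod_inl_pow_three
    · simp only [gx, ga, map_mul, map_zpow, FreeGroup.lift_apply_of, if_true,
        Bool.false_eq_true, if_false]
      rw [mul_zpow_mul_zpow_mul_zpow_eq_pow_three coprod_inl_pow_three hkl, mul_assoc,
        ← zpow_add, neg_add_cancel, zpow_zero, mul_one, coprod_inr_pow_three]

def coprodToEkl (hkl : (3 : ℤ) ∣ k + l) : C₃ ∗ C₃ →* Ekl 3 k l :=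
  Monoid.Coprod.lift (zmodPowersHom _ aE_pow_three)
    (zmodPowersHom _ (xE_mul_aE_zpow_pow_three hkl))

def eklEquivCoprod (hkl : (3 : ℤ) ∣ k + l) : Ekl 3 k l ≃* C₃ ∗ C₃ :=
  (eklToCoprod hkl).toMulEquiv (coprodToEkl hkl)
    (PresentedGroup.ext fun t => by
      cases t <;> simp [eklToCoprod, coprodToEkl, aE, xE, mul_assoc])
    (Monoid.Coprod.hom_ext (MonoidHom.ext_mzmod <| by simp [eklToCoprod, coprodToEkl, aE])
      (MonoidHom.ext_mzmod <| by simp [eklToCoprod, coprodToEkl, aE, xE, mul_assoc]))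

end Presentation

lemma not_three_dvd_of_gcd_eq_one {k l : ℤ} (hgcd : Int.gcd (3 : ℤ) (Int.gcd k l) = 1)
    (hkl : (3 : ℤ) ∣ k + l) : ¬ (3 : ℤ) ∣ k := by
  intro hk
  have h3 : 3 ∣ Int.gcd 3 (Int.gcd k l) :=
    Int.dvd_gcd dvd_rfl (Int.dvd_coe_gcd hk (by omega : (3 : ℤ) ∣ l))
  rw [hgcd] at h3
  norm_num at h3

end CPG

/-- Under condition (B) for `n = 3` with `gcd(3,k,l) = 1`, the group
`E_3(k,l)` is the free product `C₃ ∗ C₃` and the shift acts freely on the nonidentity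
elements of `G_3(k,l)`. -/
theorem statement9 (k l : ℤ) (hgcd : Int.gcd (3 : ℤ) (Int.gcd k l) = 1)
    (hB : (3 : ℤ) ∣ (k + l) ∨ (3 : ℤ) ∣ (2 * k - l) ∨ (3 : ℤ) ∣ (2 * l - k)) :
    Nonempty (CPG.Ekl 3 k l ≃*
      Monoid.Coprod (Multiplicative (ZMod 3)) (Multiplicative (ZMod 3))) ∧
    ∀ g : CPG.Gkl 3 k l, g ≠ 1 → ∀ j : ℕ, (j = 1 ∨ j = 2) →
      (CPG.shiftKL 3 k l ^ j) g ≠ g := by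
  have hkl : (3 : ℤ) ∣ k + l := by omega
  refine ⟨⟨CPG.eklEquivCoprod hkl⟩, fun g hg j hj hfix => hg ?_⟩
  have hθ : CPG.shiftKL 3 k l = (CPG.shiftKL 3 k l ^ j) ^ j := by
    rcases hj with rfl | rfl
    · simp
    · rw [← pow_mul, show 2 * 2 = 3 + 1 from rfl, pow_succ, CPG.shiftKL, CPG.shiftG_pow_self,
        one_mul]
  refine CPG.eq_one_of_shiftKL_eq_self (CPG.not_three_dvd_of_gcd_eq_one hgcd hkl) hkl ?_
  rw [hθ]
  exact MulAut.pow_apply_eq_self_of_apply_eq_self hfix j
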